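/- arXiv:2004.09865 — 3 statements merged into one kernel-verified Lean document; each statement's English description precedes it below -/
import Mathlib

section
/- (Proposition 1) Given a linear copositive problem with constraint matrix function A(x) = Σ_{i=1}^n x_i A_i + A_0, the Slater condition (there exists x̄ ∈ ℝⁿ such that tᵀA(x̄)t > 0 for all t ∈ T) holds if and only if the normalized immobile index set T_im is empty. -/
open Matrix

/-- The constraint matrix function `𝓐(x) = A₀ + ∑ i xᵢ Aᵢ`. -/
def Amap (p n : ℕ) (A₀ : Matrix (Fin p) (Fin p) ℝ)
    (A : Fin n → Matrix (Fin p) (Fin p) ℝ) (x : Fin n → ℝ) :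
    Matrix (Fin p) (Fin p) ℝ :=
  A₀ + ∑ i, x i • A i

/-- The feasible set `X = {x : tᵀ𝓐(x)t ≥ 0 ∀ t ∈ ℝ₊ᵖ}`. -/
def feasSet (p n : ℕ) (A₀ : Matrix (Fin p) (Fin p) ℝ)
    (A : Fin n → Matrix (Fin p) (Fin p) ℝ) : Set (Fin n → ℝ) :=
  {x | ∀ t : Fin p → ℝ, (∀ k, 0 ≤ t k) → 0 ≤ t ⬝ᵥ (Amap p n A₀ A x *ᵥ t)}

/-- The normalized immobile index set `T_im = {t ∈ T : tᵀ𝓐(x)t = 0 ∀ x ∈ X}`. -/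
def normImmobile (p n : ℕ) (A₀ : Matrix (Fin p) (Fin p) ℝ)
    (A : Fin n → Matrix (Fin p) (Fin p) ℝ) : Set (Fin p → ℝ) :=
  {t | (∀ k, 0 ≤ t k) ∧ (∑ k, t k) = 1 ∧
    ∀ x ∈ feasSet p n A₀ A, t ⬝ᵥ (Amap p n A₀ A x *ᵥ t) = 0}

/-- The immobile index set `R_im = {t ∈ ℝ₊ᵖ : tᵀ𝓐(x)t = 0 ∀ x ∈ X}`. -/
def immobile (p n : ℕ) (A₀ : Matrix (Fin p) (Fin p) ℝ)
    (A : Fin n → Matrix (Fin p) (Fin p) ℝ) : Set (Fin p → ℝ) :=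
  {t | (∀ k, 0 ≤ t k) ∧ ∀ x ∈ feasSet p n A₀ A, t ⬝ᵥ (Amap p n A₀ A x *ᵥ t) = 0}

/- For fixed `t` the form `tᵀA(x)t` is affine in `x`, so averaging finitely many feasible
points averages the forms. If `T_im = ∅`, every `t ∈ T` is made strictly positive by some
feasible point; by continuity this persists on an open neighbourhood of `t`, and compactness
of `T` leaves finitely many feasible points whose average is a Slater point. Conversely a
Slater point is feasible by homogeneity of the form, and it is positive, hence not zero,
at every `t ∈ T`. -/

section

variable {p n : ℕ} (A₀ : Matrix (Fin p) (Fin p) ℝ) (A : Fin n → Matrix (Fin p) (Fin p) ℝ)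

theorem Amap_sum_smul {ι : Type*} (s : Finset ι) (w : ι → ℝ) (hw : ∑ j ∈ s, w j = 1)
    (x : ι → Fin n → ℝ) :
    Amap p n A₀ A (∑ j ∈ s, w j • x j) = ∑ j ∈ s, w j • Amap p n A₀ A (x j) := by
  simp only [Amap, smul_add, Finset.sum_add_distrib, ← Finset.sum_smul, hw, one_smul,
    Finset.smul_sum, smul_smul, Finset.sum_apply, Pi.smul_apply, smul_eq_mul]
  rw [Finset.sum_comm]
  simp only [Finset.sum_smul]

theorem dotProduct_sum_smul_mulVec {R ι m : Type*} [CommSemiring R] [Fintype m]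
    (s : Finset ι) (w : ι → R) (M : ι → Matrix m m R) (t : m → R) :
    t ⬝ᵥ ((∑ j ∈ s, w j • M j) *ᵥ t) = ∑ j ∈ s, w j * (t ⬝ᵥ (M j *ᵥ t)) := by
  simp only [sum_mulVec, dotProduct_sum, smul_mulVec, dotProduct_smul, smul_eq_mul]

theorem mem_feasSet_of_pos_on_stdSimplex (x : Fin n → ℝ)
    (hx : ∀ t ∈ stdSimplex ℝ (Fin p), 0 < t ⬝ᵥ (Amap p n A₀ A x *ᵥ t)) :
    x ∈ feasSet p n A₀ A := by
  intro t ht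
  rcases (Finset.sum_nonneg fun k _ => ht k).eq_or_lt with hsum | hsum
  · have ht0 : t = 0 := funext fun k =>
      (Finset.sum_eq_zero_iff_of_nonneg fun k _ => ht k).mp hsum.symm k (Finset.mem_univ k)
    simp [ht0]
  · set c := (∑ k, t k)⁻¹
    have hc : 0 < c := inv_pos.mpr hsum
    have hct : c • t ∈ stdSimplex ℝ (Fin p) :=
      ⟨fun k => mul_nonneg hc.le (ht k), by
        simp only [Pi.smul_apply, smul_eq_mul, ← Finset.mul_sum, c, inv_mul_cancel₀ hsum.ne']⟩
    have hpos := hx _ hct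
    rw [mulVec_smul, smul_dotProduct, dotProduct_smul, smul_eq_mul, smul_eq_mul] at hpos
    exact (pos_of_mul_pos_right (pos_of_mul_pos_right hpos hc.le) hc.le).le

theorem exists_mem_feasSet_pos_of_normImmobile_eq_empty (h : normImmobile p n A₀ A = ∅)
    {t : Fin p → ℝ} (ht : t ∈ stdSimplex ℝ (Fin p)) :
    ∃ x ∈ feasSet p n A₀ A, 0 < t ⬝ᵥ (Amap p n A₀ A x *ᵥ t) := by
  by_contra! hle
  have : t ∈ normImmobile p n A₀ A := ⟨ht.1, ht.2, fun x hx => (hle x hx).antisymm (hx t ht.1)⟩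
  simp [h] at this

theorem exists_finite_feasSet_cover (h : normImmobile p n A₀ A = ∅) :
    ∃ s : Finset (Fin n → ℝ), ↑s ⊆ feasSet p n A₀ A ∧
      ∀ t ∈ stdSimplex ℝ (Fin p), ∃ x ∈ s, 0 < t ⬝ᵥ (Amap p n A₀ A x *ᵥ t) := by
  have hopen (x : Fin n → ℝ) : IsOpen {t : Fin p → ℝ | 0 < t ⬝ᵥ (Amap p n A₀ A x *ᵥ t)} :=
    isOpen_lt continuous_const (by simp only [dotProduct, mulVec]; fun_prop)
  have hcover : stdSimplex ℝ (Fin p) ⊆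
      ⋃ x ∈ feasSet p n A₀ A, {t | 0 < t ⬝ᵥ (Amap p n A₀ A x *ᵥ t)} := fun t ht => by
    simpa using exists_mem_feasSet_pos_of_normImmobile_eq_empty A₀ A h ht
  obtain ⟨b, hb, hfin, hsub⟩ := (isCompact_stdSimplex ℝ (Fin p)).elim_finite_subcover_image
    (fun x _ => hopen x) hcover
  refine ⟨hfin.toFinset, by simpa using hb, fun t ht => ?_⟩
  simpa using hsub ht

theorem exists_slater_of_finite_cover (s : Finset (Fin n → ℝ)) (hs : ↑s ⊆ feasSet p n A₀ A)
    (hcover : ∀ t ∈ stdSimplex ℝ (Fin p), ∃ x ∈ s, 0 < t ⬝ᵥ (Amap p n A₀ A x *ᵥ t)) :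
    ∃ x : Fin n → ℝ, ∀ t ∈ stdSimplex ℝ (Fin p), 0 < t ⬝ᵥ (Amap p n A₀ A x *ᵥ t) := by
  refine ⟨∑ x ∈ s, (s.card : ℝ)⁻¹ • x, fun t ht => ?_⟩
  obtain ⟨x₀, hx₀, hpos⟩ := hcover t ht
  have hcard : (0 : ℝ) < s.card := by exact_mod_cast Finset.card_pos.mpr ⟨x₀, hx₀⟩
  have hw : ∑ _x ∈ s, (s.card : ℝ)⁻¹ = 1 := by simp [hcard.ne']
  rw [Amap_sum_smul A₀ A s _ hw, dotProduct_sum_smul_mulVec]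
  exact Finset.sum_pos' (fun x hx => mul_nonneg (inv_nonneg.mpr hcard.le) (hs hx t ht.1))
    ⟨x₀, hx₀, mul_pos (inv_pos.mpr hcard) hpos⟩

end

theorem slater_iff_normImmobile_empty_general (p n : ℕ)
    (A₀ : Matrix (Fin p) (Fin p) ℝ) (A : Fin n → Matrix (Fin p) (Fin p) ℝ) :
    (∃ x : Fin n → ℝ, ∀ t : Fin p → ℝ, (∀ k, 0 ≤ t k) → (∑ k, t k) = 1 →
        0 < t ⬝ᵥ (Amap p n A₀ A x *ᵥ t)) ↔
    normImmobile p n A₀ A = ∅ := by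
  constructor
  · rintro ⟨x, hx⟩
    have hfeas := mem_feasSet_of_pos_on_stdSimplex A₀ A x fun t ht => hx t ht.1 ht.2
    refine Set.eq_empty_of_forall_notMem fun t ⟨ht₀, ht₁, hzero⟩ => ?_
    exact (hx t ht₀ ht₁).ne' (hzero x hfeas)
  · intro h
    obtain ⟨s, hs, hcover⟩ := exists_finite_feasSet_cover A₀ A h
    obtain ⟨x, hx⟩ := exists_slater_of_finite_cover A₀ A s hs hcover
    exact ⟨x, fun t ht₀ ht₁ => hx t ⟨ht₀, ht₁⟩⟩

/-- Proposition 1: the Slater condition (existence of `x̄` with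
`tᵀ𝓐(x̄)t > 0` for all `t` in the simplex `T`) holds iff the normalized immobile
index set `T_im` is empty. -/
theorem slater_iff_normImmobile_empty (p n : ℕ) (hp : 1 ≤ p) (hn : 1 ≤ n)
    (A₀ : Matrix (Fin p) (Fin p) ℝ) (A : Fin n → Matrix (Fin p) (Fin p) ℝ)
    (hA₀ : A₀.IsSymm) (hA : ∀ i, (A i).IsSymm) :
    (∃ x : Fin n → ℝ, ∀ t : Fin p → ℝ, (∀ k, 0 ≤ t k) → (∑ k, t k) = 1 →
        0 < t ⬝ᵥ (Amap p n A₀ A x *ᵥ t)) ↔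
    normImmobile p n A₀ A = ∅ :=
  slater_iff_normImmobile_empty_general p n A₀ A
end

section
/- (Proposition 2) For every normalized immobile index, the gradient-type inequalities hold along the whole feasible set: if τ ∈ T_im, then for every x ∈ X the vector A(x)τ has all components nonnegative, i.e., A(x)τ ≥ 0 componentwise. -/
open Matrix

/-!
For feasible `x` the matrix `A(x)` is copositive, and an immobile index `τ` is a zero of its
quadratic form on the nonnegative orthant, hence a minimizer there. Moving from `τ` to
`τ + s eₖ` with `s ≥ 0` stays in the orthant, so `0 ≤ 2 s (A(x)τ)ₖ + s² A(x)ₖₖ` for all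
`s ≥ 0`, which forces `(A(x)τ)ₖ ≥ 0`. Symmetry of `A(x)` is what identifies the cross term
with `(A(x)τ)ₖ`.
-/

theorem nonneg_of_forall_nonneg_two_mul_add_sq {𝕜 : Type*} [Field 𝕜] [LinearOrder 𝕜]
    [IsStrictOrderedRing 𝕜] {a c : 𝕜} (h : ∀ s, 0 ≤ s → 0 ≤ 2 * s * a + s ^ 2 * c) :
    0 ≤ a := by
  by_contra! ha
  -- at `s = -a / (|c| + 1)` the term `s ^ 2 * c` is smaller than `-s * a`
  set s := -a / (|c| + 1)
  have hd : 0 < |c| + 1 := by positivity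
  have hs : 0 < s := div_pos (neg_pos.mpr ha) hd
  have hsc : s * |c| < -a := by
    rw [div_mul_eq_mul_div, div_lt_iff₀ hd]
    nlinarith [abs_nonneg c]
  have := h s hs.le
  nlinarith [le_abs_self c, mul_le_mul_of_nonneg_left (le_abs_self c) (sq_nonneg s)]

namespace Matrix

variable {ι 𝕜 : Type*} [Fintype ι]

theorem isSymm_sum {κ n α : Type*} [AddCommMonoid α] {s : Finset κ}
    {A : κ → Matrix n n α} (h : ∀ i ∈ s, (A i).IsSymm) : (∑ i ∈ s, A i).IsSymm := by
  rw [IsSymm, transpose_sum]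
  exact Finset.sum_congr rfl fun i hi => h i hi

def IsCopositive [Semiring 𝕜] [PartialOrder 𝕜] (M : Matrix ι ι 𝕜) : Prop :=
  ∀ t : ι → 𝕜, 0 ≤ t → 0 ≤ t ⬝ᵥ M *ᵥ t

theorem IsSymm.dotProduct_mulVec_comm [CommSemiring 𝕜] {M : Matrix ι ι 𝕜} (hM : M.IsSymm)
    (u v : ι → 𝕜) : u ⬝ᵥ M *ᵥ v = v ⬝ᵥ M *ᵥ u := by
  rw [dotProduct_mulVec, ← mulVec_transpose, hM.eq, dotProduct_comm]

theorem IsSymm.dotProduct_mulVec_add_smul [CommSemiring 𝕜] {M : Matrix ι ι 𝕜} (hM : M.IsSymm)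
    (u v : ι → 𝕜) (s : 𝕜) :
    (u + s • v) ⬝ᵥ M *ᵥ (u + s • v) =
      u ⬝ᵥ M *ᵥ u + 2 * s * (v ⬝ᵥ M *ᵥ u) + s ^ 2 * (v ⬝ᵥ M *ᵥ v) := by
  rw [mulVec_add, mulVec_smul, add_dotProduct, dotProduct_add, dotProduct_add,
    smul_dotProduct, smul_dotProduct, dotProduct_smul, dotProduct_smul,
    hM.dotProduct_mulVec_comm u v, smul_eq_mul, smul_eq_mul, smul_eq_mul]
  ring

theorem IsCopositive.mulVec_nonneg_of_dotProduct_mulVec_eq_zero [Field 𝕜] [LinearOrder 𝕜]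
    [IsStrictOrderedRing 𝕜] {M : Matrix ι ι 𝕜} (hM : M.IsCopositive) (hMs : M.IsSymm)
    {τ : ι → 𝕜} (hτ : 0 ≤ τ) (hτM : τ ⬝ᵥ M *ᵥ τ = 0) : 0 ≤ M *ᵥ τ := by
  classical
  intro k
  refine nonneg_of_forall_nonneg_two_mul_add_sq (c := M k k) fun s hs => ?_
  have hmove : 0 ≤ τ + s • Pi.single k 1 :=
    add_nonneg hτ (smul_nonneg hs (Pi.single_nonneg.mpr zero_le_one))
  have := hM _ hmove
  rwa [hMs.dotProduct_mulVec_add_smul, hτM, zero_add, single_one_dotProduct,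
    mulVec_single_one, single_one_dotProduct, col_apply] at this

end Matrix

theorem isSymm_Amap {p n : ℕ} (A₀ : Matrix (Fin p) (Fin p) ℝ)
    (A : Fin n → Matrix (Fin p) (Fin p) ℝ) (hA₀ : A₀.IsSymm) (hA : ∀ i, (A i).IsSymm)
    (x : Fin n → ℝ) : (Amap p n A₀ A x).IsSymm :=
  hA₀.add (isSymm_sum fun i _ => (hA i).smul (x i))

theorem immobile_index_gradient_nonneg_general (p n : ℕ)
    (A₀ : Matrix (Fin p) (Fin p) ℝ) (A : Fin n → Matrix (Fin p) (Fin p) ℝ)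
    (hA₀ : A₀.IsSymm) (hA : ∀ i, (A i).IsSymm)
    (τ : Fin p → ℝ) (hτ : τ ∈ normImmobile p n A₀ A) :
    ∀ x ∈ feasSet p n A₀ A, ∀ k, 0 ≤ (Amap p n A₀ A x *ᵥ τ) k :=
  fun x hx =>
    (show (Amap p n A₀ A x).IsCopositive from hx).mulVec_nonneg_of_dotProduct_mulVec_eq_zero
      (isSymm_Amap A₀ A hA₀ hA x) hτ.1 (hτ.2.2 x hx)

/-- Proposition 2: if `τ ∈ T_im`, then for every feasible `x ∈ X`
the vector `𝓐(x)τ` is componentwise nonnegative. -/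
theorem immobile_index_gradient_nonneg (p n : ℕ) (hp : 1 ≤ p) (hn : 1 ≤ n)
    (A₀ : Matrix (Fin p) (Fin p) ℝ) (A : Fin n → Matrix (Fin p) (Fin p) ℝ)
    (hA₀ : A₀.IsSymm) (hA : ∀ i, (A i).IsSymm)
    (τ : Fin p → ℝ) (hτ : τ ∈ normImmobile p n A₀ A) :
    ∀ x ∈ feasSet p n A₀ A, ∀ k, 0 ≤ (Amap p n A₀ A x *ᵥ τ) k :=
  immobile_index_gradient_nonneg_general p n A₀ A hA₀ hA τ hτ
end

section
/- (Equivalence of the dual problems (ED) and (ED-R) for linear SDP) Fix an integer m₀ ≥ 0 and SDP data A_0, …, A_n ∈ S(p), c ∈ ℝⁿ. (i) If (Ũ_m, W̃_m, m = 1,…,m₀; Ũ) is feasible for (ED-R) — i.e., Ũ ∈ P(p), W̃_0 = 0, [[Ũ_m, W̃_m],[W̃_mᵀ, I]] ∈ P(2p) for m = 1,…,m₀, (Ũ_m + W̃_{m−1})•A_j = 0 for j = 0,…,n and m = 1,…,m₀, and (Ũ + W̃_{m₀})•A_j = c_j for j = 1,…,n — then setting D_m = I yields a feasible solution of (ED)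 with the same objective value −(Ũ + W̃_{m₀})•A_0. (ii) Conversely, for every feasible solution (U_m, W_m, D_m, m = 1,…,m₀; U) of (ED) — i.e., U ∈ P(p), W_0 = 0, [[U_m, W_m],[W_mᵀ, D_m]] ∈ P(2p) for m = 1,…,m₀, (U_m + W_{m−1})•A_j = 0 for j = 0,…,n and m = 1,…,m₀, and (U + W_{m₀})•A_j = c_j for j = 1,…,n — there exists a feasible solution (Ũ_m, W̃_m, m = 1,…,m₀; Ũ) of (ED-R) such that (Ũ + W̃_{m₀})•A_0 = (U + W_{m₀})•A_0. (In both problems W_{m₀} is interpreted as 0 when m₀ = 0.) -/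
/-!
(ED-R) is (ED) with every `D_m` fixed to `I`, which gives (i). For (ii), if `[[U, W], [Wᵀ, D]]`
is PSD and `yᵀ D y ≤ t |y|²` with `t > 0` (e.g. `t = tr D + 1`), then evaluating its quadratic
form at `(β t x, y)` shows that `[[β² t U, β W], [β Wᵀ, I]]` is PSD for every `β`. Rescaling
`W_m` by `γ_m` and `U_m` by `γ_{m-1} := γ_m² t_m`, starting from `γ_{m₀} = 1`, therefore makes
every block constraint hold with `D_m = I`, multiplies each homogeneous constraint
`(U_m + W_{m-1}) • A_j = 0` by `γ_{m-1}`, and leaves `W_{m₀}` and hence the objective unchanged.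
-/

open Matrix

/-- Feasibility for the extended dual problem (ED) of a linear SDP, with blocks
`D_m` as variables.  `Wm 0 = 0` encodes the convention `W₀ = 0` (so that
`Wm m₀ = 0` when `m₀ = 0`). -/
def feasED (p n m₀ : ℕ) (A₀ : Matrix (Fin p) (Fin p) ℝ)
    (A : Fin n → Matrix (Fin p) (Fin p) ℝ) (c : Fin n → ℝ)
    (U : Matrix (Fin p) (Fin p) ℝ) (Um Wm Dm : ℕ → Matrix (Fin p) (Fin p) ℝ) :
    Prop :=
  U.PosSemidef ∧ Wm 0 = 0 ∧
  (∀ m, 1 ≤ m → m ≤ m₀ →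
    (Matrix.fromBlocks (Um m) (Wm m) (Wm m)ᵀ (Dm m)).PosSemidef) ∧
  (∀ m, 1 ≤ m → m ≤ m₀ →
    ((Um m + Wm (m - 1)) * A₀).trace = 0 ∧
    ∀ j : Fin n, ((Um m + Wm (m - 1)) * A j).trace = 0) ∧
  (∀ j : Fin n, ((U + Wm m₀) * A j).trace = c j)

/-- Feasibility for the Ramana–Tunçel–Wolkowicz regularized dual (ED-R): the
lower-right blocks are the identity matrix. -/
def feasEDR (p n m₀ : ℕ) (A₀ : Matrix (Fin p) (Fin p) ℝ)
    (A : Fin n → Matrix (Fin p) (Fin p) ℝ) (c : Fin n → ℝ)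
    (U : Matrix (Fin p) (Fin p) ℝ) (Um Wm : ℕ → Matrix (Fin p) (Fin p) ℝ) :
    Prop :=
  feasED p n m₀ A₀ A c U Um Wm (fun _ => (1 : Matrix (Fin p) (Fin p) ℝ))

namespace Matrix

variable {m n : Type*} [Fintype m] [Fintype n]

theorem sumElim_dotProduct_fromBlocks_mulVec_sumElim {R : Type*} [CommRing R]
    (A : Matrix m m R) (B : Matrix m n R) (D : Matrix n n R) (x : m → R) (y : n → R) :
    Sum.elim x y ⬝ᵥ fromBlocks A B Bᵀ D *ᵥ Sum.elim x y =
      x ⬝ᵥ A *ᵥ x + 2 * (x ⬝ᵥ B *ᵥ y) + y ⬝ᵥ D *ᵥ y := by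
  rw [fromBlocks_mulVec, sumElim_dotProduct_sumElim]
  simp only [Sum.elim_comp_inl, Sum.elim_comp_inr, dotProduct_add, mulVec_transpose,
    dotProduct_comm y (x ᵥ* B), ← dotProduct_mulVec]
  ring

theorem dotProduct_mulVec_transpose_mul_self_le (B : Matrix m n ℝ) (y : n → ℝ) :
    y ⬝ᵥ (Bᵀ * B) *ᵥ y ≤ (Bᵀ * B).trace * (y ⬝ᵥ y) := by
  have htrace : (Bᵀ * B).trace = ∑ i, ∑ j, B i j ^ 2 := by
    simp only [trace, diag, mul_apply, transpose_apply, sq]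
    exact Finset.sum_comm
  calc y ⬝ᵥ (Bᵀ * B) *ᵥ y = ∑ i, (∑ j, B i j * y j) ^ 2 := by
        rw [← mulVec_mulVec, dotProduct_mulVec, vecMul_transpose]
        simp only [dotProduct, mulVec, sq]
    _ ≤ ∑ i, (∑ j, B i j ^ 2) * ∑ j, y j ^ 2 :=
        Finset.sum_le_sum fun i _ => Finset.sum_mul_sq_le_sq_mul_sq _ _ _
    _ = (Bᵀ * B).trace * (y ⬝ᵥ y) := by
        simp only [htrace, ← Finset.sum_mul, dotProduct, sq]

open scoped MatrixOrder in
theorem PosSemidef.dotProduct_mulVec_le_trace_mul [DecidableEq n] {D : Matrix n n ℝ}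
    (hD : D.PosSemidef) (y : n → ℝ) : y ⬝ᵥ D *ᵥ y ≤ D.trace * (y ⬝ᵥ y) := by
  obtain ⟨B, rfl⟩ := CStarAlgebra.nonneg_iff_eq_star_mul_self.mp hD.nonneg
  exact dotProduct_mulVec_transpose_mul_self_le B y

theorem PosSemidef.fromBlocks_one_of_dotProduct_mulVec_le [DecidableEq n] {U : Matrix m m ℝ}
    {W : Matrix m n ℝ} {D : Matrix n n ℝ} (h : (fromBlocks U W Wᵀ D).PosSemidef) {t : ℝ}
    (ht : 0 < t) (hD : ∀ y, y ⬝ᵥ D *ᵥ y ≤ t * (y ⬝ᵥ y)) (β : ℝ) :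
    (fromBlocks ((β ^ 2 * t) • U) (β • W) (β • W)ᵀ 1).PosSemidef := by
  have hU : U.IsHermitian := (isHermitian_fromBlocks_iff.mp h.1).1
  refine .of_dotProduct_mulVec_nonneg
    ((hU.smul (.all _)).fromBlocks rfl isHermitian_one) fun z => ?_
  rw [star_trivial, ← Sum.elim_comp_inl_inr z, sumElim_dotProduct_fromBlocks_mulVec_sumElim]
  set x := z ∘ Sum.inl
  set y := z ∘ Sum.inr
  -- `t` times the goal is the hypothesis at `(β t x, y)`, up to replacing `y D y` by `t |y|²`
  have hxy := h.dotProduct_mulVec_nonneg (Sum.elim ((β * t) • x) y)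
  rw [star_trivial, sumElim_dotProduct_fromBlocks_mulVec_sumElim] at hxy
  simp only [smul_mulVec, mulVec_smul, smul_dotProduct, dotProduct_smul, one_mulVec,
    smul_eq_mul] at hxy ⊢
  nlinarith [hD y]

theorem PosSemidef.fromBlocks_one_of_trace_add_one [DecidableEq n] {U : Matrix m m ℝ} {W : Matrix m n ℝ}
    {D : Matrix n n ℝ} (h : (fromBlocks U W Wᵀ D).PosSemidef) (β : ℝ) :
    (fromBlocks ((β ^ 2 * (D.trace + 1)) • U) (β • W) (β • W)ᵀ 1).PosSemidef := by
  have hD : D.PosSemidef := h.submatrix Sum.inr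
  refine h.fromBlocks_one_of_dotProduct_mulVec_le (by linarith [hD.trace_nonneg]) (fun y => ?_) β
  have hy : 0 ≤ y ⬝ᵥ y := by simpa only [star_trivial] using dotProduct_star_self_nonneg y
  nlinarith [hD.dotProduct_mulVec_le_trace_mul y]

end Matrix

/-- The factor `γ_{m₀-k}` of the rescaling, indexed by `k = m₀ - m` so that the downward
recursion from `γ_{m₀} = 1` is structural. -/
noncomputable def edrScale {p : ℕ} (m₀ : ℕ) (Dm : ℕ → Matrix (Fin p) (Fin p) ℝ) : ℕ → ℝ
  | 0 => 1
  | k + 1 => edrScale m₀ Dm k ^ 2 * ((Dm (m₀ - k)).trace + 1)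

theorem edrScale_sub_add_one {p : ℕ} {m₀ m : ℕ} (Dm : ℕ → Matrix (Fin p) (Fin p) ℝ)
    (hm : m ≤ m₀) :
    edrScale m₀ Dm (m₀ - m + 1) = edrScale m₀ Dm (m₀ - m) ^ 2 * ((Dm m).trace + 1) := by
  rw [edrScale, Nat.sub_sub_self hm]

theorem feasEDR_of_feasED {p n m₀ : ℕ} {A₀ : Matrix (Fin p) (Fin p) ℝ}
    {A : Fin n → Matrix (Fin p) (Fin p) ℝ} {c : Fin n → ℝ} {U : Matrix (Fin p) (Fin p) ℝ}
    {Um Wm Dm : ℕ → Matrix (Fin p) (Fin p) ℝ} (h : feasED p n m₀ A₀ A c U Um Wm Dm) :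
    feasEDR p n m₀ A₀ A c U (fun m => edrScale m₀ Dm (m₀ - m + 1) • Um m)
      (fun m => edrScale m₀ Dm (m₀ - m) • Wm m) := by
  obtain ⟨hU, hW₀, hblock, hlin, hobj⟩ := h
  refine ⟨hU, by simp [hW₀], fun m hm₁ hm => ?_, fun m hm₁ hm => ?_, fun j => ?_⟩
  · dsimp only
    rw [edrScale_sub_add_one Dm hm]
    exact (hblock m hm₁ hm).fromBlocks_one_of_trace_add_one _
  · have hsum : edrScale m₀ Dm (m₀ - m + 1) • Um m + edrScale m₀ Dm (m₀ - (m - 1)) • Wm (m - 1)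
        = edrScale m₀ Dm (m₀ - m + 1) • (Um m + Wm (m - 1)) := by
      rw [show m₀ - (m - 1) = m₀ - m + 1 by omega, smul_add]
    obtain ⟨hA₀, hA⟩ := hlin m hm₁ hm
    simp only [hsum, smul_mul, trace_smul, hA₀, hA, smul_zero, implies_true, and_self]
  · simpa [edrScale] using hobj j

theorem ED_EDR_equivalent_general (p n : ℕ) (m₀ : ℕ)
    (A₀ : Matrix (Fin p) (Fin p) ℝ) (A : Fin n → Matrix (Fin p) (Fin p) ℝ) (c : Fin n → ℝ) :
    (∀ (Ut : Matrix (Fin p) (Fin p) ℝ) (Umt Wmt : ℕ → Matrix (Fin p) (Fin p) ℝ),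
      feasEDR p n m₀ A₀ A c Ut Umt Wmt →
        feasED p n m₀ A₀ A c Ut Umt Wmt (fun _ => (1 : Matrix (Fin p) (Fin p) ℝ)) ∧
        -((Ut + Wmt m₀) * A₀).trace = -((Ut + Wmt m₀) * A₀).trace) ∧
    (∀ (U : Matrix (Fin p) (Fin p) ℝ) (Um Wm Dm : ℕ → Matrix (Fin p) (Fin p) ℝ),
      feasED p n m₀ A₀ A c U Um Wm Dm →
        ∃ (Ut : Matrix (Fin p) (Fin p) ℝ) (Umt Wmt : ℕ → Matrix (Fin p) (Fin p) ℝ),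
          feasEDR p n m₀ A₀ A c Ut Umt Wmt ∧
          ((Ut + Wmt m₀) * A₀).trace = ((U + Wm m₀) * A₀).trace) := by
  refine ⟨fun Ut Umt Wmt h => ⟨h, rfl⟩, fun U Um Wm Dm h => ?_⟩
  exact ⟨U, _, _, feasEDR_of_feasED h, by simp [edrScale]⟩

/-- equivalence of the dual problems (ED) and (ED-R) for linear SDP:
(i) every feasible solution of (ED-R) yields, by taking `D_m = I`, a feasible
solution of (ED) with the same objective value `−(Ũ + W̃_{m₀}) • A₀`;
(ii) conversely, for every feasible solution of (ED) there is a feasible solution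
of (ED-R) with the same objective value. -/
theorem ED_EDR_equivalent (p n : ℕ) (hp : 1 ≤ p) (hn : 1 ≤ n) (m₀ : ℕ)
    (A₀ : Matrix (Fin p) (Fin p) ℝ) (A : Fin n → Matrix (Fin p) (Fin p) ℝ)
    (hA₀ : A₀.IsSymm) (hA : ∀ i, (A i).IsSymm) (c : Fin n → ℝ) :
    (∀ (Ut : Matrix (Fin p) (Fin p) ℝ) (Umt Wmt : ℕ → Matrix (Fin p) (Fin p) ℝ),
      feasEDR p n m₀ A₀ A c Ut Umt Wmt →
        feasED p n m₀ A₀ A c Ut Umt Wmt (fun _ => (1 : Matrix (Fin p) (Fin p) ℝ)) ∧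
        -((Ut + Wmt m₀) * A₀).trace = -((Ut + Wmt m₀) * A₀).trace) ∧
    (∀ (U : Matrix (Fin p) (Fin p) ℝ) (Um Wm Dm : ℕ → Matrix (Fin p) (Fin p) ℝ),
      feasED p n m₀ A₀ A c U Um Wm Dm →
        ∃ (Ut : Matrix (Fin p) (Fin p) ℝ) (Umt Wmt : ℕ → Matrix (Fin p) (Fin p) ℝ),
          feasEDR p n m₀ A₀ A c Ut Umt Wmt ∧
          ((Ut + Wmt m₀) * A₀).trace = ((U + Wm m₀) * A₀).trace) :=
  ED_EDR_equivalent_general p n m₀ A₀ A c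
end
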